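/- Let T be a simplicial tree, i.e., a k-family (k ≥ 2) on vertex set {1,…,n} that is ridge-connected and every subfamily of which has a leaf. Then for every t with 1 ≤ t ≤ C(n,k−1), λ₁(T) + ⋯ + λ_t(T) ≤ (k−1)·f_{k−1}(T) + k·t − k + 1. -/

import Mathlib

/-- Signed boundary matrix of a `k`-family `S` on vertex set `Fin n`: rows are indexed
by the `(k-1)`-element subsets, columns by the facets; the `(R,F)` entry is `(-1)^j`
if `R ⊆ F` and the unique element of `F \ R` is the `(j+1)`-st smallest element of
`F`, and `0` otherwise. -/
noncomputable def bdry (n k : ℕ) (S : Finset (Finset (Fin n))) :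
    Matrix {R : Finset (Fin n) // R.card = k - 1} {F : Finset (Fin n) // F ∈ S} ℝ :=
  fun R F =>
    if R.1 ⊆ F.1 then
      ∑ x ∈ F.1 \ R.1, (-1 : ℝ) ^ (F.1.filter (fun y => y < x)).card
    else 0

/-- The Laplacian `∂ ∂ᵀ` of a `k`-family. -/
noncomputable def simpLap (n k : ℕ) (S : Finset (Finset (Fin n))) :
    Matrix {R : Finset (Fin n) // R.card = k - 1} {R : Finset (Fin n) // R.card = k - 1} ℝ :=
  bdry n k S * (bdry n k S).conjTranspose

lemma simpLap_isHermitian (n k : ℕ) (S : Finset (Finset (Fin n))) :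
    (simpLap n k S).IsHermitian :=
  Matrix.isHermitian_mul_conjTranspose_self _

/-- Sum of the `t` largest eigenvalues (with multiplicity) of a Hermitian real matrix. -/
noncomputable def topEigSum {m : Type} [Fintype m] [DecidableEq m]
    {A : Matrix m m ℝ} (hA : A.IsHermitian) (t : ℕ) : ℝ :=
  ((((Finset.univ.val.map hA.eigenvalues)).sort (· ≥ ·)).take t).sum

/-- The `t`-th generalized Brouwer inequality for a `k`-family `S`:
`λ₁(S) + ⋯ + λ_t(S) ≤ (k-1)·f_{k-1}(S) + C(t+k-1, k)`. -/
noncomputable def GenBrouwerIneq (n k : ℕ) (S : Finset (Finset (Fin n))) (t : ℕ) : Prop :=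
  topEigSum (simpLap_isHermitian n k S) t ≤
    ((k : ℝ) - 1) * S.card + ((t + k - 1).choose k : ℝ)

section AuxHelpers
open Matrix

-- general helpers
lemma conjT_mulVec {a b : Type*} [Fintype a] [Fintype b] (D : Matrix a b ℝ) (x : a → ℝ) :
    Dᴴ *ᵥ x = x ᵥ* D := by
  funext F
  simp [Matrix.mulVec, Matrix.vecMul, dotProduct, Matrix.conjTranspose_apply, mul_comm]

lemma dot_gram {a b : Type*} [Fintype a] [Fintype b] (A : Matrix a b ℝ) (x : b → ℝ) :
    x ⬝ᵥ ((Aᴴ * A) *ᵥ x) = ∑ i, ((A *ᵥ x) i)^2 := by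
  rw [← Matrix.mulVec_mulVec, conjT_mulVec, dotProduct_comm, ← Matrix.dotProduct_mulVec]
  simp [dotProduct, sq]

lemma gram_trace {a b : Type*} [Fintype a] [Fintype b] (A : Matrix a b ℝ) :
    (Aᴴ * A).trace = ∑ i : a, ∑ j : b, (A i j)^2 := by
  simp only [Matrix.trace, Matrix.diag, Matrix.mul_apply, Matrix.conjTranspose_apply,
    star_trivial, ← sq]
  exact Finset.sum_comm

lemma trace_eq_sum_eigs {m : Type} [Fintype m] [DecidableEq m] {A : Matrix m m ℝ}
    (hA : A.IsHermitian) : A.trace = ∑ i, hA.eigenvalues i := by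
  rw [hA.trace_eq_sum_eigenvalues]
  simp

lemma dot_self_of_norm_one {ι : Type} [Fintype ι] (x : EuclideanSpace ℝ ι) (h : ‖x‖ = 1) :
    (⇑x : ι → ℝ) ⬝ᵥ ⇑x = 1 := by
  have h2 : (inner ℝ x x : ℝ) = (⇑x : ι → ℝ) ⬝ᵥ ⇑x := by
    rw [PiLp.inner_apply]
    simp [RCLike.inner_apply, dotProduct, starRingEnd_apply, sq]
  rw [← h2, real_inner_self_eq_norm_sq, h, one_pow]

lemma parseval_dot {ι : Type} [Fintype ι] [DecidableEq ι]
    (b : OrthonormalBasis ι ℝ (EuclideanSpace ℝ ι)) (z : ι → ℝ) :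
    ∑ i, ((⇑(b i) : ι → ℝ) ⬝ᵥ z) ^ 2 = z ⬝ᵥ z := by
  have key := b.sum_inner_mul_inner ((WithLp.equiv 2 _).symm z) ((WithLp.equiv 2 _).symm z)
  have h1 : ∀ i, (inner ℝ ((WithLp.equiv 2 (ι → ℝ)).symm z) (b i) : ℝ) = (⇑(b i) : ι → ℝ) ⬝ᵥ z := by
    intro i
    simp [PiLp.inner_apply, RCLike.inner_apply, dotProduct, starRingEnd_apply, mul_comm]
  have h2 : ∀ i, (inner ℝ (b i) ((WithLp.equiv 2 (ι → ℝ)).symm z) : ℝ) = (⇑(b i) : ι → ℝ) ⬝ᵥ z := by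
    intro i
    simp [PiLp.inner_apply, RCLike.inner_apply, dotProduct, starRingEnd_apply, mul_comm]
  have h3 : (inner ℝ ((WithLp.equiv 2 (ι → ℝ)).symm z) ((WithLp.equiv 2 (ι → ℝ)).symm z) : ℝ)
      = z ⬝ᵥ z := by
    rw [PiLp.inner_apply]
    simp [RCLike.inner_apply, dotProduct, starRingEnd_apply, sq]
  rw [← h3, ← key]
  refine Finset.sum_congr rfl fun i _ => ?_
  rw [h1 i, h2 i, sq]

lemma exists_sub_of_le_map {α β : Type*} [DecidableEq α] [DecidableEq β] (f : α → β) :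
    ∀ (m : Multiset β) (s : Multiset α), m ≤ s.map f → ∃ u ≤ s, u.map f = m := by
  intro m
  induction m using Multiset.induction_on with
  | empty => exact fun s _ => ⟨0, Multiset.zero_le _, rfl⟩
  | cons a m ih =>
    intro s h
    have ha : a ∈ s.map f := Multiset.mem_of_le h (Multiset.mem_cons_self a m)
    obtain ⟨b, hb, rfl⟩ := Multiset.mem_map.mp ha
    have hs : b ::ₘ s.erase b = s := Multiset.cons_erase hb
    have h2 : m ≤ (s.erase b).map f := by
      have h3 := Multiset.erase_le_erase (f b) h
      rw [Multiset.erase_cons_head] at h3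
      calc m ≤ (s.map f).erase (f b) := h3
        _ = ((b ::ₘ s.erase b).map f).erase (f b) := by rw [hs]
        _ = (s.erase b).map f := by rw [Multiset.map_cons, Multiset.erase_cons_head]
    obtain ⟨u, hu, hum⟩ := ih (s.erase b) h2
    refine ⟨b ::ₘ u, ?_, by rw [Multiset.map_cons, hum]⟩
    calc b ::ₘ u ≤ b ::ₘ s.erase b := Multiset.cons_le_cons _ hu
      _ = s := hs

lemma topEigSum_eq_sum {m : Type} [Fintype m] [DecidableEq m]
    {A : Matrix m m ℝ} (hA : A.IsHermitian) (t : ℕ) :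
    ∃ I : Finset m, I.card ≤ t ∧ topEigSum hA t = ∑ i ∈ I, hA.eigenvalues i := by
  classical
  set l := (Finset.univ.val.map hA.eigenvalues).sort (· ≥ ·) with hl
  have hle : ((l.take t : List ℝ) : Multiset ℝ) ≤ Finset.univ.val.map hA.eigenvalues := by
    conv_rhs => rw [← Multiset.sort_eq (Finset.univ.val.map hA.eigenvalues) (· ≥ ·)]
    exact Multiset.coe_le.mpr (l.take_sublist t).subperm
  obtain ⟨u, hu, hum⟩ := exists_sub_of_le_map hA.eigenvalues _ _ hle
  have hnd : u.Nodup := Multiset.nodup_of_le hu Finset.univ.nodup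
  refine ⟨⟨u, hnd⟩, ?_, ?_⟩
  · have hcard : u.card = (l.take t).length := by
      rw [← Multiset.card_map hA.eigenvalues u, hum, Multiset.coe_card]
    rw [Finset.card, hcard, List.length_take]
    exact min_le_left _ _
  · show (l.take t).sum = _
    have h4 : ∑ i ∈ (⟨u, hnd⟩ : Finset m), hA.eigenvalues i = (u.map hA.eigenvalues).sum := rfl
    rw [h4, hum, Multiset.sum_coe]

lemma sum_cross_le {ι : Type*} {J : Finset ι} {p q : ι → ℝ} {m : ℝ}
    (hcs : ∀ j ∈ J, (p j)^2 ≤ m * q j)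
    (hpar : ∑ j ∈ J, (p j)^2 ≤ m)
    (hm0 : m = 0 → ∀ j ∈ J, p j = 0 ∧ q j = 0)
    (hm1 : m ≠ 0 → 1 ≤ m) :
    ∑ j ∈ J, ((p j)^2 - q j) ≤ if m = 0 then 0 else m - 1 := by
  by_cases h0 : m = 0
  · rw [if_pos h0]
    have h5 : ∑ j ∈ J, ((p j)^2 - q j) = 0 := Finset.sum_eq_zero fun j hj => by
      obtain ⟨h1, h2⟩ := hm0 h0 j hj
      rw [h1, h2]; ring
    linarith
  · have h1 : (1:ℝ) ≤ m := hm1 h0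
    have hmpos : (0:ℝ) < m := by linarith
    rw [if_neg h0]
    calc ∑ j ∈ J, ((p j)^2 - q j) ≤ ∑ j ∈ J, ((p j)^2 - (p j)^2/m) := by
          apply Finset.sum_le_sum
          intro j hj
          have hq : (p j)^2 / m ≤ q j := by
            rw [div_le_iff₀ hmpos]
            calc (p j)^2 ≤ m * q j := hcs j hj
              _ = q j * m := by ring
          linarith
      _ = (1 - 1/m) * ∑ j ∈ J, (p j)^2 := by
          rw [Finset.mul_sum]
          exact Finset.sum_congr rfl fun j _ => by field_simp
      _ ≤ (1 - 1/m) * m := by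
          apply mul_le_mul_of_nonneg_left hpar
          have : 1/m ≤ 1 := by rw [div_le_one hmpos]; exact h1
          linarith
      _ = m - 1 := by field_simp


section bdryLemmas
variable {n k : ℕ} {T : Finset (Finset (Fin n))}

lemma bdry_zero {R : {R : Finset (Fin n) // R.card = k - 1}} {F : {F : Finset (Fin n) // F ∈ T}}
    (h : ¬ R.1 ⊆ F.1) : bdry n k T R F = 0 := if_neg h

lemma bdry_pm (hk : 1 ≤ k) (hcard : ∀ F ∈ T, F.card = k)
    {R : {R : Finset (Fin n) // R.card = k - 1}} {F : {F : Finset (Fin n) // F ∈ T}}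
    (h : R.1 ⊆ F.1) : ∃ c : ℕ, bdry n k T R F = (-1 : ℝ) ^ c := by
  have h1 : (F.1 \ R.1).card = 1 := by
    rw [Finset.card_sdiff_of_subset h, hcard F.1 F.2, R.2]; omega
  obtain ⟨x, hx⟩ := Finset.card_eq_one.mp h1
  exact ⟨_, by rw [bdry, if_pos h, hx, Finset.sum_singleton]⟩

lemma bdry_sq (hk : 1 ≤ k) (hcard : ∀ F ∈ T, F.card = k)
    {R : {R : Finset (Fin n) // R.card = k - 1}} {F : {F : Finset (Fin n) // F ∈ T}}
    (h : R.1 ⊆ F.1) : (bdry n k T R F) ^ 2 = 1 := by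
  obtain ⟨c, hc⟩ := bdry_pm hk hcard h
  rw [hc, pow_right_comm]
  norm_num

lemma bdry_cube (hk : 1 ≤ k) (hcard : ∀ F ∈ T, F.card = k)
    (R : {R : Finset (Fin n) // R.card = k - 1}) (F : {F : Finset (Fin n) // F ∈ T}) :
    (bdry n k T R F) ^ 3 = bdry n k T R F := by
  by_cases h : R.1 ⊆ F.1
  · obtain ⟨c, hc⟩ := bdry_pm hk hcard h
    rw [hc, pow_right_comm]
    norm_num
  · rw [bdry_zero h]; norm_num

lemma bdry_colsq (hk : 1 ≤ k) (hcard : ∀ F ∈ T, F.card = k)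
    (F : {F : Finset (Fin n) // F ∈ T}) :
    ∑ R : {R : Finset (Fin n) // R.card = k - 1}, (bdry n k T R F) ^ 2 = (k : ℝ) := by
  classical
  have hg : ∀ R : {R : Finset (Fin n) // R.card = k - 1},
      (bdry n k T R F) ^ 2 = if R.1 ⊆ F.1 then (1:ℝ) else 0 := by
    intro R
    by_cases h : R.1 ⊆ F.1
    · rw [bdry_sq hk hcard h, if_pos h]
    · rw [bdry_zero h, if_neg h]; norm_num
  calc ∑ R : {R : Finset (Fin n) // R.card = k - 1}, (bdry n k T R F) ^ 2
      = ∑ R : {R : Finset (Fin n) // R.card = k - 1}, if R.1 ⊆ F.1 then (1:ℝ) else 0 :=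
        Finset.sum_congr rfl fun R _ => hg R
    _ = ((Finset.univ.filter (fun R : {R : Finset (Fin n) // R.card = k - 1} => R.1 ⊆ F.1)).card : ℝ) := by
        rw [Finset.sum_boole]
    _ = (k : ℝ) := by
        norm_cast
        have hbij : (Finset.univ.filter
            (fun R : {R : Finset (Fin n) // R.card = k - 1} => R.1 ⊆ F.1)).card
            = (F.1.powersetCard (k-1)).card := by
          apply Finset.card_bij (fun R _ => R.1)
          · intro R hR
            rw [Finset.mem_filter] at hR
            exact Finset.mem_powersetCard.mpr ⟨hR.2, R.2⟩
          · intro a ha b hb hab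
            exact Subtype.ext hab
          · intro S hS
            rw [Finset.mem_powersetCard] at hS
            exact ⟨⟨S, hS.2⟩, Finset.mem_filter.mpr ⟨Finset.mem_univ _, hS.1⟩, rfl⟩
        rw [hbij, Finset.card_powersetCard, hcard F.1 F.2]
        have h1 : k - (k-1) = 1 := by omega
        have h2 := Nat.choose_symm (Nat.sub_le k 1)
        rw [h1, Nat.choose_one_right] at h2
        omega

end bdryLemmas


lemma main_bound (n k : ℕ) (hk : 2 ≤ k) (T : Finset (Finset (Fin n)))
    (hcard : ∀ F ∈ T, F.card = k) (t : ℕ)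
    (hridge : ((Finset.univ.filter (fun R : {R : Finset (Fin n) // R.card = k - 1} =>
        (∑ F : {F : Finset (Fin n) // F ∈ T}, (bdry n k T R F)^2) ≠ 0)).card : ℝ)
        ≥ (T.card : ℝ) + (k : ℝ) - 1) :
    topEigSum (simpLap_isHermitian n k T) t ≤
      (k:ℝ) * t + ((k:ℝ) * T.card - ((T.card : ℝ) + (k:ℝ) - 1)) := by
  classical
  have hk1 : 1 ≤ k := by omega
  set D := bdry n k T with hD
  obtain ⟨I, hIcard, hIsum⟩ := topEigSum_eq_sum (simpLap_isHermitian n k T) t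
  set v : {R : Finset (Fin n) // R.card = k - 1} → ({R : Finset (Fin n) // R.card = k - 1} → ℝ) :=
    fun i => ⇑((simpLap_isHermitian n k T).eigenvectorBasis i) with hv
  set N : Matrix {x // x ∈ I} {F : Finset (Fin n) // F ∈ T} ℝ :=
    Matrix.of (fun i F => (Dᴴ *ᵥ v i.1) F) with hN
  set C := Nᴴ * N with hCdef
  have hCH : C.IsHermitian := (Matrix.posSemidef_conjTranspose_mul_self N).isHermitian
  -- Step A : trace of C equals the top eigenvalue sum
  have hrow : ∀ i : {x // x ∈ I}, (∑ F, (N i F)^2)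
      = (simpLap_isHermitian n k T).eigenvalues i.1 := by
    intro i
    have h1 : ∑ F, (N i F)^2 = ∑ F, ((Dᴴ *ᵥ v i.1) F)^2 := rfl
    have h2 := dot_gram Dᴴ (v i.1)
    rw [Matrix.conjTranspose_conjTranspose] at h2
    have h3 : (D * Dᴴ) *ᵥ (v i.1)
        = (simpLap_isHermitian n k T).eigenvalues i.1 • v i.1 :=
      (simpLap_isHermitian n k T).mulVec_eigenvectorBasis i.1
    have h4 : v i.1 ⬝ᵥ v i.1 = 1 :=
      dot_self_of_norm_one _ ((simpLap_isHermitian n k T).eigenvectorBasis.orthonormal.1 i.1)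
    have h5 : v i.1 ⬝ᵥ ((D * Dᴴ) *ᵥ v i.1) = (simpLap_isHermitian n k T).eigenvalues i.1 := by
      rw [h3, dotProduct_smul, smul_eq_mul, h4, mul_one]
    exact h1.trans (h2.symm.trans h5)
  have htrace : C.trace = ∑ i ∈ I, (simpLap_isHermitian n k T).eigenvalues i := by
    rw [hCdef, gram_trace N]
    rw [Finset.sum_congr rfl fun i _ => hrow i]
    exact Finset.sum_coe_sort I (simpLap_isHermitian n k T).eigenvalues
  -- Step B : the nonzero eigenvalues of C
  set J := Finset.univ.filter (fun j => hCH.eigenvalues j ≠ 0) with hJ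
  have hJcard : (J.card : ℝ) ≤ (t : ℝ) := by
    have h1 : J.card = Fintype.card {j // hCH.eigenvalues j ≠ 0} := (Fintype.card_subtype _).symm
    have h2 : C.rank = Fintype.card {j // hCH.eigenvalues j ≠ 0} :=
      hCH.rank_eq_card_non_zero_eigs
    have h3 : C.rank = N.rank := Matrix.rank_conjTranspose_mul_self N
    have h4 : N.rank ≤ Fintype.card {x // x ∈ I} := Matrix.rank_le_card_height N
    have h5 : Fintype.card {x // x ∈ I} = I.card := Fintype.card_coe I
    have : J.card ≤ t := by omega
    exact_mod_cast this
  have htrace2 : C.trace = ∑ j ∈ J, hCH.eigenvalues j := by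
    rw [trace_eq_sum_eigs hCH,
      ← Finset.sum_filter_add_sum_filter_not Finset.univ (fun j => hCH.eigenvalues j ≠ 0)
        hCH.eigenvalues]
    have h6 : ∑ j ∈ Finset.univ.filter (fun j => ¬ hCH.eigenvalues j ≠ 0), hCH.eigenvalues j
        = 0 := Finset.sum_eq_zero fun j hj => by
      have := (Finset.mem_filter.mp hj).2
      simpa using this
    rw [h6, add_zero]
  -- notation for eigenvectors of C
  set w : {F : Finset (Fin n) // F ∈ T} → ({F : Finset (Fin n) // F ∈ T} → ℝ) :=
    fun j => ⇑(hCH.eigenvectorBasis j) with hw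
  set z : {F : Finset (Fin n) // F ∈ T} → ({R : Finset (Fin n) // R.card = k - 1} → ℝ) :=
    fun j => D *ᵥ w j with hz
  set qq : {R : Finset (Fin n) // R.card = k - 1} → {F : Finset (Fin n) // F ∈ T} → ℝ :=
    fun R j => ∑ F, (D R F)^2 * (w j F)^2 with hqq
  set mR : {R : Finset (Fin n) // R.card = k - 1} → ℝ :=
    fun R => ∑ F, (D R F)^2 with hmR
  -- Step C : eigenvalue bound
  have hmu : ∀ j, hCH.eigenvalues j ≤ (k:ℝ) + ∑ R, ((z j R)^2 - qq R j) := by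
    intro j
    have hw1 : w j ⬝ᵥ w j = 1 :=
      dot_self_of_norm_one _ (hCH.eigenvectorBasis.orthonormal.1 j)
    have heig : hCH.eigenvalues j = w j ⬝ᵥ (C *ᵥ w j) := by
      rw [hCH.mulVec_eigenvectorBasis j]
      show _ = w j ⬝ᵥ (hCH.eigenvalues j • w j)
      rw [dotProduct_smul, smul_eq_mul, hw1, mul_one]
    have hCform : w j ⬝ᵥ (C *ᵥ w j) = ∑ i : {x // x ∈ I}, ((N *ᵥ w j) i)^2 := dot_gram N (w j)
    have hNmul : ∀ i : {x // x ∈ I}, (N *ᵥ w j) i = v i.1 ⬝ᵥ z j := by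
      intro i
      show (fun F => (Dᴴ *ᵥ v i.1) F) ⬝ᵥ w j = _
      calc (fun F => (Dᴴ *ᵥ v i.1) F) ⬝ᵥ w j = (v i.1 ᵥ* D) ⬝ᵥ w j := by rw [conjT_mulVec]
        _ = v i.1 ⬝ᵥ (D *ᵥ w j) := (Matrix.dotProduct_mulVec _ _ _).symm
    have hsub : ∑ i : {x // x ∈ I}, ((N *ᵥ w j) i)^2 ≤ ∑ i : {R : Finset (Fin n) // R.card = k - 1},
        (v i ⬝ᵥ z j)^2 := by
      rw [Finset.sum_congr rfl fun i _ => by rw [hNmul i]]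
      rw [Finset.sum_coe_sort I (fun i => (v i ⬝ᵥ z j)^2)]
      exact Finset.sum_le_sum_of_subset_of_nonneg (Finset.subset_univ I)
        (fun i _ _ => sq_nonneg _)
    have hpars : ∑ i : {R : Finset (Fin n) // R.card = k - 1}, (v i ⬝ᵥ z j)^2 = z j ⬝ᵥ z j :=
      parseval_dot ((simpLap_isHermitian n k T).eigenvectorBasis) (z j)
    have hzz : z j ⬝ᵥ z j = ∑ R, (z j R)^2 := by simp [dotProduct, sq]
    have hdecomp : ∑ R, (z j R)^2 = (∑ R, qq R j) + ∑ R, ((z j R)^2 - qq R j) := by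
      rw [← Finset.sum_add_distrib]
      exact Finset.sum_congr rfl fun R _ => by ring
    have hqsum : ∑ R, qq R j = (k:ℝ) := by
      have h7 : ∑ R, qq R j = ∑ F, (∑ R, (D R F)^2) * (w j F)^2 := by
        rw [Finset.sum_comm]
        exact Finset.sum_congr rfl fun F _ => by rw [Finset.sum_mul]
      rw [h7, Finset.sum_congr rfl fun F _ => by rw [bdry_colsq hk1 hcard F]]
      have h8 : ∑ F, (k:ℝ) * (w j F)^2 = (k:ℝ) * (w j ⬝ᵥ w j) := by
        show _ = (k:ℝ) * ∑ F, w j F * w j F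
        rw [Finset.mul_sum]
        exact Finset.sum_congr rfl fun F _ => by rw [sq]
      rw [h8, hw1, mul_one]
    calc hCH.eigenvalues j = w j ⬝ᵥ (C *ᵥ w j) := heig
      _ = ∑ i : {x // x ∈ I}, ((N *ᵥ w j) i)^2 := hCform
      _ ≤ ∑ i : {R : Finset (Fin n) // R.card = k - 1}, (v i ⬝ᵥ z j)^2 := hsub
      _ = ∑ R, (z j R)^2 := by rw [hpars, hzz]
      _ = (∑ R, qq R j) + ∑ R, ((z j R)^2 - qq R j) := hdecomp
      _ = (k:ℝ) + ∑ R, ((z j R)^2 - qq R j) := by rw [hqsum]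
  -- Step D : per-ridge bound on cross sums over J
  have hcross : ∀ R : {R : Finset (Fin n) // R.card = k - 1},
      ∑ j ∈ J, ((z j R)^2 - qq R j) ≤ if mR R = 0 then 0 else mR R - 1 := by
    intro R
    apply sum_cross_le
    · intro j _
      have hcs := Finset.sum_mul_sq_le_sq_mul_sq Finset.univ
        (fun F => (D R F)^2) (fun F => D R F * w j F)
      have e1 : ∑ F, (D R F)^2 * (D R F * w j F) = z j R := by
        have hzr : z j R = ∑ F, D R F * w j F := rfl
        rw [hzr]
        refine Finset.sum_congr rfl fun F _ => ?_
        calc (D R F)^2 * (D R F * w j F) = (D R F)^3 * w j F := by ring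
          _ = D R F * w j F := by rw [bdry_cube hk1 hcard R F]
      have e2 : ∑ F, ((D R F)^2)^2 = mR R := by
        refine Finset.sum_congr rfl fun F _ => ?_
        have hc := bdry_cube hk1 hcard R F
        calc ((D R F)^2)^2 = (D R F)^3 * D R F := by ring
          _ = D R F * D R F := by rw [hc]
          _ = (D R F)^2 := by ring
      have e3 : ∑ F, (D R F * w j F)^2 = qq R j := by
        refine Finset.sum_congr rfl fun F _ => ?_
        ring
      rw [e1, e2, e3] at hcs
      exact hcs
    · have h9 : ∀ j, (z j R)^2 = ((⇑(hCH.eigenvectorBasis j) : _ → ℝ) ⬝ᵥ (fun F => D R F))^2 := by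
        intro j
        have : z j R = (fun F => D R F) ⬝ᵥ w j := rfl
        rw [this, dotProduct_comm]
      calc ∑ j ∈ J, (z j R)^2 ≤ ∑ j : {F : Finset (Fin n) // F ∈ T}, (z j R)^2 :=
            Finset.sum_le_sum_of_subset_of_nonneg (Finset.subset_univ J)
              (fun j _ _ => sq_nonneg _)
        _ = (fun F => D R F) ⬝ᵥ (fun F => D R F) := by
            rw [Finset.sum_congr rfl fun j _ => h9 j]
            exact parseval_dot (hCH.eigenvectorBasis) (fun F => D R F)
        _ = mR R := by
            show ∑ F, D R F * D R F = ∑ F, (D R F)^2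
            exact Finset.sum_congr rfl fun F _ => (sq (D R F)).symm
    · intro h0 j _
      have hall : ∀ F, D R F = 0 := by
        intro F
        have h10 := (Finset.sum_eq_zero_iff_of_nonneg (fun F _ => sq_nonneg (D R F))).mp h0
        have := h10 F (Finset.mem_univ F)
        exact (pow_eq_zero_iff (by norm_num : (2:ℕ) ≠ 0)).mp this
      constructor
      · show (D *ᵥ w j) R = 0
        simp [Matrix.mulVec, dotProduct, hall]
      · show ∑ F, (D R F)^2 * (w j F)^2 = 0
        exact Finset.sum_eq_zero fun F _ => by rw [hall F]; ring
    · intro h0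
      by_contra hcon
      push_neg at hcon
      have hex : ∃ F, D R F ≠ 0 := by
        by_contra hno
        push_neg at hno
        exact h0 (Finset.sum_eq_zero fun F _ => by rw [hno F]; ring)
      obtain ⟨F, hF⟩ := hex
      have hsubRF : R.1 ⊆ F.1 := by
        by_contra hns
        exact hF (bdry_zero hns)
      have hone := bdry_sq hk1 hcard hsubRF
      have hle : (1:ℝ) ≤ mR R := by
        rw [← hone]
        exact Finset.single_le_sum (fun F _ => sq_nonneg (D R F)) (Finset.mem_univ F)
      linarith
  -- Step E : total per-ridge budget
  have hb : ∑ R : {R : Finset (Fin n) // R.card = k - 1}, (if mR R = 0 then (0:ℝ) else mR R - 1)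
      ≤ (k:ℝ) * T.card - ((T.card : ℝ) + (k:ℝ) - 1) := by
    have e4 : ∀ R, (if mR R = 0 then (0:ℝ) else mR R - 1)
        = mR R - (if mR R ≠ 0 then (1:ℝ) else 0) := by
      intro R
      by_cases h : mR R = 0
      · rw [if_pos h, if_neg (by simpa using h), h]; ring
      · rw [if_neg h, if_pos h]
    rw [Finset.sum_congr rfl fun R _ => e4 R, Finset.sum_sub_distrib]
    have e5 : ∑ R : {R : Finset (Fin n) // R.card = k - 1}, mR R = (k:ℝ) * T.card := by
      show ∑ R : {R : Finset (Fin n) // R.card = k - 1}, ∑ F, (D R F)^2 = _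
      rw [Finset.sum_comm, Finset.sum_congr rfl fun F _ => bdry_colsq hk1 hcard F]
      rw [Finset.sum_const, Finset.card_univ, Fintype.card_coe, nsmul_eq_mul]
      ring
    have e6 : ∑ R : {R : Finset (Fin n) // R.card = k - 1}, (if mR R ≠ 0 then (1:ℝ) else 0)
        = ((Finset.univ.filter (fun R : {R : Finset (Fin n) // R.card = k - 1} =>
            mR R ≠ 0)).card : ℝ) := by
      rw [Finset.sum_boole]
    rw [e5, e6]
    have := hridge
    linarith
  -- Final assembly
  rw [hIsum, ← htrace, htrace2]
  calc ∑ j ∈ J, hCH.eigenvalues j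
      ≤ ∑ j ∈ J, ((k:ℝ) + ∑ R, ((z j R)^2 - qq R j)) :=
        Finset.sum_le_sum fun j _ => hmu j
    _ = (k:ℝ) * J.card + ∑ j ∈ J, ∑ R, ((z j R)^2 - qq R j) := by
        rw [Finset.sum_add_distrib, Finset.sum_const, nsmul_eq_mul]
        ring
    _ = (k:ℝ) * J.card + ∑ R, ∑ j ∈ J, ((z j R)^2 - qq R j) := by rw [Finset.sum_comm]
    _ ≤ (k:ℝ) * t + ∑ R : {R : Finset (Fin n) // R.card = k - 1},
          (if mR R = 0 then (0:ℝ) else mR R - 1) := by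
        have hkn : (0:ℝ) ≤ (k:ℝ) := by positivity
        have h11 : (k:ℝ) * J.card ≤ (k:ℝ) * t := mul_le_mul_of_nonneg_left hJcard hkn
        have h12 := Finset.sum_le_sum fun R (_ : R ∈ Finset.univ) => hcross R
        linarith
    _ ≤ (k:ℝ) * t + ((k:ℝ) * T.card - ((T.card : ℝ) + (k:ℝ) - 1)) := by linarith

end AuxHelpers

/-- The ridge graph of a `k`-family: vertices are the facets, two facets being
adjacent exactly when their intersection has `k-1` elements. -/
def ridgeGraph (n k : ℕ) (S : Finset (Finset (Fin n))) :
    SimpleGraph {F : Finset (Fin n) // F ∈ S} where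
  Adj F G := F ≠ G ∧ (F.1 ∩ G.1).card = k - 1
  symm := ⟨fun F G h => ⟨h.1.symm, by rw [Finset.inter_comm]; exact h.2⟩⟩
  loopless := ⟨fun F h => h.1 rfl⟩

/-- A facet `F` of the family `T` is a leaf if either `F` is the only facet of `T`,
or there is a facet `G ≠ F` of `T` with
`F ∩ (⋃ of the facets of T other than F) ⊆ G`. -/
def IsLeaf (n : ℕ) (T : Finset (Finset (Fin n))) (F : Finset (Fin n)) : Prop :=
  T = {F} ∨ ∃ G ∈ T, G ≠ F ∧ F ∩ ((T.erase F).sup id) ⊆ G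

/-- A `k`-family is a simplicial tree if it is ridge-connected and every nonempty
subfamily of it has a leaf. -/
def IsSimplicialTree (n k : ℕ) (T : Finset (Finset (Fin n))) : Prop :=
  (ridgeGraph n k T).Connected ∧
    ∀ H ⊆ T, H.Nonempty → ∃ F ∈ H, IsLeaf n H F

section AuxRidges

lemma ridges_lb {n k : ℕ} {T : Finset (Finset (Fin n))} (hk : 2 ≤ k)
    (hcard : ∀ F ∈ T, F.card = k)
    (hleaf : ∀ H ⊆ T, H.Nonempty → ∃ F ∈ H, IsLeaf n H F) :
    ∀ (m : ℕ) (H : Finset (Finset (Fin n))), H.card = m → H ⊆ T → H.Nonempty →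
      H.card + k ≤ (H.biUnion (fun F => F.powersetCard (k-1))).card + 1 := by
  intro m
  induction m using Nat.strong_induction_on with
  | _ m ih =>
    intro H hm hHT hne
    obtain ⟨F, hF, hleafF⟩ := hleaf H hHT hne
    have hFk : F.card = k := hcard F (hHT hF)
    rcases hleafF with heq | ⟨G, hG, hGF, hsub⟩
    · subst heq
      rw [Finset.singleton_biUnion, Finset.card_singleton, Finset.card_powersetCard, hFk]
      have h1 : k - (k-1) = 1 := by omega
      have h2 := Nat.choose_symm (Nat.sub_le k 1)
      rw [h1, Nat.choose_one_right] at h2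
      omega
    · set H' := H.erase F with hH'
      have hG' : G ∈ H' := Finset.mem_erase.mpr ⟨hGF, hG⟩
      have hH'card : H'.card + 1 = H.card := Finset.card_erase_add_one hF
      have hHne : 1 ≤ H.card := Finset.card_pos.mpr hne
      have hIH := ih H'.card (by omega) H' rfl ((Finset.erase_subset _ _).trans hHT) ⟨G, hG'⟩
      have hins : insert F H' = H := Finset.insert_erase hF
      have hsplit : H.biUnion (fun F => F.powersetCard (k-1))
          = F.powersetCard (k-1) ∪ H'.biUnion (fun F => F.powersetCard (k-1)) := by
        conv_lhs => rw [← hins]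
        rw [Finset.biUnion_insert]
      have hGk : G.card = k := hcard G (hHT hG)
      have hFGcard : (F ∩ G).card ≤ k - 1 := by
        by_contra hcon
        push_neg at hcon
        have h5 : (F ∩ G).card ≤ F.card := Finset.card_le_card (Finset.inter_subset_left)
        have h6 : F ∩ G = F := Finset.eq_of_subset_of_card_le Finset.inter_subset_left (by omega)
        have h7 : F ⊆ G := by rw [← h6]; exact Finset.inter_subset_right
        exact hGF (Finset.eq_of_subset_of_card_le h7 (by omega)).symm
      have hinter : (F.powersetCard (k-1) ∩ H'.biUnion (fun F => F.powersetCard (k-1))).card ≤ 1 := by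
        refine Finset.card_le_one.mpr ?_
        have hkey : ∀ R ∈ F.powersetCard (k-1) ∩ H'.biUnion (fun F => F.powersetCard (k-1)),
            R = F ∩ G := by
          intro R hR
          rw [Finset.mem_inter] at hR
          obtain ⟨hR1, hR2⟩ := hR
          rw [Finset.mem_powersetCard] at hR1
          obtain ⟨G', hG'mem, hRG'⟩ := Finset.mem_biUnion.mp hR2
          rw [Finset.mem_powersetCard] at hRG'
          have hRsup : R ⊆ H'.sup id := hRG'.1.trans (Finset.le_sup (f := id) hG'mem)
          have hRFG : R ⊆ F ∩ G := (Finset.subset_inter hR1.1 hRsup).trans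
            (Finset.subset_inter (Finset.inter_subset_left) hsub)
          exact Finset.eq_of_subset_of_card_le hRFG (by omega)
        intro a ha b hb
        rw [hkey a ha, hkey b hb]
      have hP : (F.powersetCard (k-1)).card = k := by
        rw [Finset.card_powersetCard, hFk]
        have h1 : k - (k-1) = 1 := by omega
        have h2 := Nat.choose_symm (Nat.sub_le k 1)
        rw [h1, Nat.choose_one_right] at h2
        omega
      have hu := Finset.card_union_add_card_inter (F.powersetCard (k-1))
        (H'.biUnion (fun F => F.powersetCard (k-1)))
      rw [hsplit]
      omega


end AuxRidges

/-- For a simplicial tree `T`,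
`λ₁(T) + ⋯ + λ_t(T) ≤ (k-1)·f_{k-1}(T) + k·t - k + 1` for all `1 ≤ t ≤ C(n,k-1)`. -/
theorem genBrouwer_simplicial_tree (n k : ℕ) (hk : 2 ≤ k)
    (T : Finset (Finset (Fin n))) (hne : T.Nonempty)
    (hcard : ∀ F ∈ T, F.card = k)
    (htree : IsSimplicialTree n k T) :
    ∀ t : ℕ, 1 ≤ t → t ≤ n.choose (k - 1) →
      topEigSum (simpLap_isHermitian n k T) t ≤
        ((k : ℝ) - 1) * T.card + (k : ℝ) * t - k + 1 := by
  intro t _ _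
  classical
  have hk1 : 1 ≤ k := by omega
  have hrlb := ridges_lb hk hcard htree.2 T.card T rfl (subset_refl T) hne
  have hbijcard : (Finset.univ.filter (fun R : {R : Finset (Fin n) // R.card = k - 1} =>
      (∑ F : {F : Finset (Fin n) // F ∈ T}, (bdry n k T R F)^2) ≠ 0)).card
      = (T.biUnion (fun F => F.powersetCard (k-1))).card := by
    apply Finset.card_bij (fun R _ => R.1)
    · intro R hR
      rw [Finset.mem_filter] at hR
      have hex : ∃ F : {F : Finset (Fin n) // F ∈ T}, bdry n k T R F ≠ 0 := by
        by_contra hno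
        push_neg at hno
        exact hR.2 (Finset.sum_eq_zero fun F _ => by rw [hno F]; ring)
      obtain ⟨F, hF⟩ := hex
      have hsub : R.1 ⊆ F.1 := by
        by_contra hns; exact hF (bdry_zero hns)
      exact Finset.mem_biUnion.mpr ⟨F.1, F.2, Finset.mem_powersetCard.mpr ⟨hsub, R.2⟩⟩
    · intro a _ b _ hab
      exact Subtype.ext hab
    · intro S hS
      obtain ⟨F, hFT, hSF⟩ := Finset.mem_biUnion.mp hS
      rw [Finset.mem_powersetCard] at hSF
      refine ⟨⟨S, hSF.2⟩, Finset.mem_filter.mpr ⟨Finset.mem_univ _, ?_⟩, rfl⟩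
      have h1 := bdry_sq hk1 hcard (R := ⟨S, hSF.2⟩) (F := ⟨F, hFT⟩) hSF.1
      have hle : (1:ℝ) ≤ ∑ F' : {F : Finset (Fin n) // F ∈ T},
          (bdry n k T ⟨S, hSF.2⟩ F')^2 := by
        rw [← h1]
        exact Finset.single_le_sum
          (f := fun F' : {F : Finset (Fin n) // F ∈ T} => (bdry n k T ⟨S, hSF.2⟩ F')^2)
          (fun F' _ => sq_nonneg _) (Finset.mem_univ (⟨F, hFT⟩ : {F : Finset (Fin n) // F ∈ T}))
      intro h0
      rw [h0] at hle
      linarith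
  have hridge : ((Finset.univ.filter (fun R : {R : Finset (Fin n) // R.card = k - 1} =>
      (∑ F : {F : Finset (Fin n) // F ∈ T}, (bdry n k T R F)^2) ≠ 0)).card : ℝ)
      ≥ (T.card : ℝ) + (k : ℝ) - 1 := by
    rw [hbijcard]
    have h2 := (Nat.cast_le (α := ℝ)).mpr hrlb
    push_cast at h2
    linarith
  have hmb := main_bound n k hk T hcard t hridge
  have hf1 : (1:ℝ) ≤ (T.card : ℝ) := by
    have := Finset.card_pos.mpr hne
    exact_mod_cast this
  linarith
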